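/- arXiv:2603.04003 — 3 statements merged into one kernel-verified Lean document; each statement's English description precedes it below -/
import Mathlib

section
/- Under the stated hypotheses, if η ∈ ℝ^V and y ∈ ℝ^U satisfy the within-level equations, then η is given explicitly by η = M ( α + Γ X + ξ + Q_0 A (ν + K X + ε) + Σ_{l=1}^L (B_l + Q_0 A Λ_l) η⁽ˡ⁾ + Σ_{l=1}^L (Q_l + Q_0 A R_l) y⁽ˡ⁾ ). -/
lemma mulVec_finsum {m n : Type*} [Fintype n] (M : Matrix m n ℝ) {ι : Type*}
    (s : Finset ι) (f : ι → n → ℝ) :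
    M.mulVec (∑ l ∈ s, f l) = ∑ l ∈ s, M.mulVec (f l) := by
  exact map_sum M.mulVecLin f s

/-- Explicit formula for the contemporaneous latent variable `η` in the within-level
DSEM: if `(η, y)` satisfies the within-level equations, then
`η = M (α + Γ X + ξ + Q₀ A (ν + K X + ε) + Σ_l (B_l + Q₀ A Λ_l) η⁽ˡ⁾
      + Σ_l (Q_l + Q₀ A R_l) y⁽ˡ⁾)`. -/
theorem within_level_eta_formula (U V p L : ℕ)
    (hU : 0 < U) (hV : 0 < V) (hp : 0 < p) (hL : 1 ≤ L)
    (ν : Fin U → ℝ) (α : Fin V → ℝ) (X : Fin p → ℝ)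
    (K : Matrix (Fin U) (Fin p) ℝ) (Γ : Matrix (Fin V) (Fin p) ℝ)
    (Λ : Fin (L + 1) → Matrix (Fin U) (Fin V) ℝ)
    (R : Fin (L + 1) → Matrix (Fin U) (Fin U) ℝ)
    (B : Fin (L + 1) → Matrix (Fin V) (Fin V) ℝ)
    (Q : Fin (L + 1) → Matrix (Fin V) (Fin U) ℝ)
    (hR0 : ∀ i j : Fin U, i ≤ j → R 0 i j = 0)
    (hB0 : ∀ i j : Fin V, i ≤ j → B 0 i j = 0)
    (ηp : Fin L → Fin V → ℝ) (yp : Fin L → Fin U → ℝ)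
    (ε : Fin U → ℝ) (ξ : Fin V → ℝ)
    (A : Matrix (Fin U) (Fin U) ℝ) (hA : A = (1 - R 0)⁻¹)
    (Ξ : Matrix (Fin V) (Fin V) ℝ) (hΞ : Ξ = (1 - B 0)⁻¹)
    (hMinv : IsUnit (1 - Ξ * Q 0 * A * Λ 0))
    (hNinv : IsUnit (1 - A * Λ 0 * Ξ * Q 0))
    (M : Matrix (Fin V) (Fin V) ℝ) (hM : M = (1 - Ξ * Q 0 * A * Λ 0)⁻¹ * Ξ)
    (N : Matrix (Fin U) (Fin U) ℝ) (hN : N = (1 - A * Λ 0 * Ξ * Q 0)⁻¹ * A)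
    (η : Fin V → ℝ) (y : Fin U → ℝ)
    (hy : y = ν + (Λ 0).mulVec η + (∑ l : Fin L, (Λ l.succ).mulVec (ηp l)) +
        (R 0).mulVec y + (∑ l : Fin L, (R l.succ).mulVec (yp l)) +
        K.mulVec X + ε)
    (hη : η = α + (B 0).mulVec η + (∑ l : Fin L, (B l.succ).mulVec (ηp l)) +
        (Q 0).mulVec y + (∑ l : Fin L, (Q l.succ).mulVec (yp l)) +
        Γ.mulVec X + ξ) :
    η = M.mulVec (α + Γ.mulVec X + ξ + (Q 0 * A).mulVec (ν + K.mulVec X + ε) +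
        (∑ l : Fin L, (B l.succ + Q 0 * A * Λ l.succ).mulVec (ηp l)) +
        (∑ l : Fin L, (Q l.succ + Q 0 * A * R l.succ).mulVec (yp l))) := by
  -- invertibility of 1 - R 0 and 1 - B 0
  have hRdet : (1 - R 0).det = 1 := by
    have htri : (1 - R 0).BlockTriangular OrderDual.toDual := by
      intro i j hij
      have hlt : i < j := hij
      simp [Matrix.sub_apply, Matrix.one_apply, hlt.ne, hR0 i j hlt.le]
    rw [Matrix.det_of_lowerTriangular _ htri]
    simp [Matrix.sub_apply, Matrix.one_apply, hR0 _ _ le_rfl]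
  have hBdet : (1 - B 0).det = 1 := by
    have htri : (1 - B 0).BlockTriangular OrderDual.toDual := by
      intro i j hij
      have hlt : i < j := hij
      simp [Matrix.sub_apply, Matrix.one_apply, hlt.ne, hB0 i j hlt.le]
    rw [Matrix.det_of_lowerTriangular _ htri]
    simp [Matrix.sub_apply, Matrix.one_apply, hB0 _ _ le_rfl]
  have hRu : IsUnit (1 - R 0).det := by rw [hRdet]; exact isUnit_one
  have hBu : IsUnit (1 - B 0).det := by rw [hBdet]; exact isUnit_one
  have hA1 : A * (1 - R 0) = 1 := by rw [hA]; exact Matrix.nonsing_inv_mul _ hRu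
  have hΞ1 : Ξ * (1 - B 0) = 1 := by rw [hΞ]; exact Matrix.nonsing_inv_mul _ hBu
  -- solve for y
  have h1 : (1 - R 0).mulVec y = ν + (Λ 0).mulVec η +
      (∑ l : Fin L, (Λ l.succ).mulVec (ηp l)) +
      (∑ l : Fin L, (R l.succ).mulVec (yp l)) + K.mulVec X + ε := by
    rw [Matrix.sub_mulVec, Matrix.one_mulVec]
    nth_rewrite 1 [hy]
    abel
  have hy' : y = A.mulVec (ν + (Λ 0).mulVec η +
      (∑ l : Fin L, (Λ l.succ).mulVec (ηp l)) +
      (∑ l : Fin L, (R l.succ).mulVec (yp l)) + K.mulVec X + ε) := by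
    rw [← h1, Matrix.mulVec_mulVec, hA1, Matrix.one_mulVec]
  -- solve for η in terms of y
  have h2 : (1 - B 0).mulVec η = α + (∑ l : Fin L, (B l.succ).mulVec (ηp l)) +
      (Q 0).mulVec y + (∑ l : Fin L, (Q l.succ).mulVec (yp l)) +
      Γ.mulVec X + ξ := by
    rw [Matrix.sub_mulVec, Matrix.one_mulVec]
    nth_rewrite 1 [hη]
    abel
  have hη' : η = Ξ.mulVec (α + (∑ l : Fin L, (B l.succ).mulVec (ηp l)) +
      (Q 0).mulVec y + (∑ l : Fin L, (Q l.succ).mulVec (yp l)) +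
      Γ.mulVec X + ξ) := by
    rw [← h2, Matrix.mulVec_mulVec, hΞ1, Matrix.one_mulVec]
  have key : (1 - Ξ * Q 0 * A * Λ 0).mulVec η =
      Ξ.mulVec (α + Γ.mulVec X + ξ + (Q 0 * A).mulVec (ν + K.mulVec X + ε) +
        (∑ l : Fin L, (B l.succ + Q 0 * A * Λ l.succ).mulVec (ηp l)) +
        (∑ l : Fin L, (Q l.succ + Q 0 * A * R l.succ).mulVec (yp l))) := by
    rw [Matrix.sub_mulVec, Matrix.one_mulVec]
    nth_rewrite 1 [hη']
    rw [hy']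
    simp only [Matrix.mulVec_add, Matrix.add_mulVec, Matrix.mulVec_mulVec,
      mulVec_finsum, Finset.sum_add_distrib, ← Matrix.mulVec_mulVec]
    abel
  have hMu : IsUnit (1 - Ξ * Q 0 * A * Λ 0).det :=
    (Matrix.isUnit_iff_isUnit_det _).mp hMinv
  have : ((1 - Ξ * Q 0 * A * Λ 0)⁻¹).mulVec ((1 - Ξ * Q 0 * A * Λ 0).mulVec η) = η := by
    rw [Matrix.mulVec_mulVec, Matrix.nonsing_inv_mul _ hMu, Matrix.one_mulVec]
  rw [hM, ← Matrix.mulVec_mulVec, ← key, this]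
end

section
/- Under the stated hypotheses, if η ∈ ℝ^V and y ∈ ℝ^U satisfy the within-level equations, then y is given explicitly by y = N ( ν + K X + ε + Λ_0 Ξ (α + Γ X + ξ) + Σ_{l=1}^L (Λ_l + Λ_0 Ξ B_l) η⁽ˡ⁾ + Σ_{l=1}^L (R_l + Λ_0 Ξ Q_l) y⁽ˡ⁾ ). -/
open Matrix

lemma strict_lower_isUnit_det {n : ℕ} (R0 : Matrix (Fin n) (Fin n) ℝ)
    (h : ∀ i j : Fin n, i ≤ j → R0 i j = 0) : IsUnit (1 - R0).det := by
  have hdet : (1 - R0).det = 1 := by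
    rw [Matrix.det_of_lowerTriangular (1 - R0)
      (by intro i j hij
          have hij' : (i : Fin n) < j := hij
          simp [Matrix.one_apply_ne (ne_of_lt hij'), h i j hij'.le])]
    have : ∀ i : Fin n, (1 - R0) i i = 1 := by
      intro i; simp [h i i le_rfl]
    simp [this]
  rw [hdet]; exact isUnit_one

lemma mulVec_sum' {m n k : ℕ} (M : Matrix (Fin m) (Fin n) ℝ) (f : Fin k → Fin n → ℝ) :
    M.mulVec (∑ l, f l) = ∑ l, M.mulVec (f l) :=
  map_sum M.mulVecLin f Finset.univ

set_option maxHeartbeats 1600000 in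
/-- Explicit formula for the contemporaneous observation `y` in the within-level
DSEM: if `(η, y)` satisfies the within-level equations, then
`y = N (ν + K X + ε + Λ₀ Ξ (α + Γ X + ξ) + Σ_l (Λ_l + Λ₀ Ξ B_l) η⁽ˡ⁾
      + Σ_l (R_l + Λ₀ Ξ Q_l) y⁽ˡ⁾)`. -/
theorem within_level_y_formula (U V p L : ℕ)
    (hU : 0 < U) (hV : 0 < V) (hp : 0 < p) (hL : 1 ≤ L)
    (ν : Fin U → ℝ) (α : Fin V → ℝ) (X : Fin p → ℝ)
    (K : Matrix (Fin U) (Fin p) ℝ) (Γ : Matrix (Fin V) (Fin p) ℝ)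
    (Λ : Fin (L + 1) → Matrix (Fin U) (Fin V) ℝ)
    (R : Fin (L + 1) → Matrix (Fin U) (Fin U) ℝ)
    (B : Fin (L + 1) → Matrix (Fin V) (Fin V) ℝ)
    (Q : Fin (L + 1) → Matrix (Fin V) (Fin U) ℝ)
    (hR0 : ∀ i j : Fin U, i ≤ j → R 0 i j = 0)
    (hB0 : ∀ i j : Fin V, i ≤ j → B 0 i j = 0)
    (ηp : Fin L → Fin V → ℝ) (yp : Fin L → Fin U → ℝ)
    (ε : Fin U → ℝ) (ξ : Fin V → ℝ)
    (A : Matrix (Fin U) (Fin U) ℝ) (hA : A = (1 - R 0)⁻¹)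
    (Ξ : Matrix (Fin V) (Fin V) ℝ) (hΞ : Ξ = (1 - B 0)⁻¹)
    (hMinv : IsUnit (1 - Ξ * Q 0 * A * Λ 0))
    (hNinv : IsUnit (1 - A * Λ 0 * Ξ * Q 0))
    (M : Matrix (Fin V) (Fin V) ℝ) (hM : M = (1 - Ξ * Q 0 * A * Λ 0)⁻¹ * Ξ)
    (N : Matrix (Fin U) (Fin U) ℝ) (hN : N = (1 - A * Λ 0 * Ξ * Q 0)⁻¹ * A)
    (η : Fin V → ℝ) (y : Fin U → ℝ)
    (hy : y = ν + (Λ 0).mulVec η + (∑ l : Fin L, (Λ l.succ).mulVec (ηp l)) +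
        (R 0).mulVec y + (∑ l : Fin L, (R l.succ).mulVec (yp l)) +
        K.mulVec X + ε)
    (hη : η = α + (B 0).mulVec η + (∑ l : Fin L, (B l.succ).mulVec (ηp l)) +
        (Q 0).mulVec y + (∑ l : Fin L, (Q l.succ).mulVec (yp l)) +
        Γ.mulVec X + ξ) :
    y = N.mulVec (ν + K.mulVec X + ε + (Λ 0 * Ξ).mulVec (α + Γ.mulVec X + ξ) +
        (∑ l : Fin L, (Λ l.succ + Λ 0 * Ξ * B l.succ).mulVec (ηp l)) +
        (∑ l : Fin L, (R l.succ + Λ 0 * Ξ * Q l.succ).mulVec (yp l))) := by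
  have hAd := strict_lower_isUnit_det (R 0) hR0
  have hΞd := strict_lower_isUnit_det (B 0) hB0
  have hA1 : A * (1 - R 0) = 1 := by rw [hA]; exact Matrix.nonsing_inv_mul _ hAd
  have hΞ1 : Ξ * (1 - B 0) = 1 := by rw [hΞ]; exact Matrix.nonsing_inv_mul _ hΞd
  set cy : Fin U → ℝ := ν + K.mulVec X + ε + (∑ l : Fin L, (Λ l.succ).mulVec (ηp l)) +
      (∑ l : Fin L, (R l.succ).mulVec (yp l)) with hcy
  set cη : Fin V → ℝ := α + Γ.mulVec X + ξ + (∑ l : Fin L, (B l.succ).mulVec (ηp l)) +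
      (∑ l : Fin L, (Q l.succ).mulVec (yp l)) with hcη
  clear_value cy cη
  have h1 : (1 - R 0).mulVec y = cy + (Λ 0).mulVec η := by
    rw [Matrix.sub_mulVec, Matrix.one_mulVec, hcy]
    nth_rewrite 1 [hy]
    abel
  have h2 : (1 - B 0).mulVec η = cη + (Q 0).mulVec y := by
    rw [Matrix.sub_mulVec, Matrix.one_mulVec, hcη]
    nth_rewrite 1 [hη]
    abel
  have hyA : y = A.mulVec (cy + (Λ 0).mulVec η) := by
    rw [← h1, Matrix.mulVec_mulVec, hA1, Matrix.one_mulVec]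
  have hηΞ : η = Ξ.mulVec (cη + (Q 0).mulVec y) := by
    rw [← h2, Matrix.mulVec_mulVec, hΞ1, Matrix.one_mulVec]
  have hyA' : y = A.mulVec cy + (A * Λ 0 * Ξ).mulVec cη + (A * Λ 0 * Ξ * Q 0).mulVec y :=
    calc y = A.mulVec (cy + (Λ 0).mulVec η) := hyA
      _ = A.mulVec cy + (A * Λ 0).mulVec η := by
          rw [Matrix.mulVec_add, Matrix.mulVec_mulVec]
      _ = A.mulVec cy + (A * Λ 0).mulVec (Ξ.mulVec (cη + (Q 0).mulVec y)) := by
          rw [← hηΞ]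
      _ = A.mulVec cy + (A * Λ 0 * Ξ).mulVec cη + (A * Λ 0 * Ξ * Q 0).mulVec y := by
          simp only [Matrix.mulVec_mulVec, Matrix.mulVec_add, Matrix.mul_assoc]
          abel
  have key : (1 - A * Λ 0 * Ξ * Q 0).mulVec y = A.mulVec cy + (A * Λ 0 * Ξ).mulVec cη := by
    rw [Matrix.sub_mulVec, Matrix.one_mulVec]
    nth_rewrite 1 [hyA']
    abel
  have hNd : IsUnit (1 - A * Λ 0 * Ξ * Q 0).det :=
    (Matrix.isUnit_iff_isUnit_det _).1 hNinv
  have hN1 : (1 - A * Λ 0 * Ξ * Q 0)⁻¹ * (1 - A * Λ 0 * Ξ * Q 0) = 1 :=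
    Matrix.nonsing_inv_mul _ hNd
  have hy2 : y = N.mulVec (cy + (Λ 0 * Ξ).mulVec cη) := by
    have h3 := congrArg ((1 - A * Λ 0 * Ξ * Q 0)⁻¹).mulVec key
    rw [Matrix.mulVec_mulVec, hN1, Matrix.one_mulVec] at h3
    rw [h3, hN, Matrix.mulVec_add]
    simp only [Matrix.mulVec_add, ← Matrix.mulVec_mulVec, Matrix.mul_assoc]
  rw [hy2]
  congr 1
  rw [hcy, hcη]
  simp only [Matrix.mulVec_add, Matrix.add_mulVec, mulVec_sum', Matrix.mulVec_mulVec,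
    Matrix.mul_assoc, Finset.sum_add_distrib]
  abel
end

section
/- (Theorem 1, converse direction, pathwise form.) Suppose that for every t ∈ ℤ the sequences η and y satisfy the decoupled recursions η_{t+1} = M_{t+1}( α_{t+1} + Γ_{t+1} X_{t+1} + ξ_{t+1} + Q_{0,t+1} A_{t+1}(ν_{t+1} + K_{t+1} X_{t+1} + ε_{t+1}) + Σ_{k=1}^L (B_{k,t+1} + Q_{0,t+1} A_{t+1} Λ_{k,t+1}) η_{t+1−k} + Σ_{k=1}^L (Q_{k,t+1} + Q_{0,t+1} A_{t+1} R_{k,t+1}) y_{t+1−k} ) and y_{t+1} = N_{t+1}( ν_{t+1} + K_{t+1} X_{t+1} + ε_{t+1} + Λ_{0,t+1} Ξ_{t+1}(α_{t+1} + Γ_{t+1} X_{t+1} + ξ_{t+1}) + Σ_{k=1}^L (Λ_{k,t+1} + Λ_{0,t+1} Ξ_{t+1} B_{k,t+1}) η_{t+1−k} + Σ_{k=1}^L (R_{k,t+1} + Λ_{0,t+1} Ξ_{t+1} Q_{k,t+1}) y_{t+1−k} ). Then η and y satisfy the within-level equations for every t ∈ ℤ. -/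
open Matrix

private lemma mulVec_sum'_s13 {m n ι : Type*} [Fintype n] (M : Matrix m n ℝ) (s : Finset ι)
    (f : ι → n → ℝ) : M.mulVec (∑ i ∈ s, f i) = ∑ i ∈ s, M.mulVec (f i) :=
  map_sum M.mulVecLin f s

private lemma dsem_key {U V : ℕ} (R0 A : Matrix (Fin U) (Fin U) ℝ)
    (B0 Xi : Matrix (Fin V) (Fin V) ℝ)
    (Λ0 : Matrix (Fin U) (Fin V) ℝ) (Q0 : Matrix (Fin V) (Fin U) ℝ)
    (hA1 : (1 - R0) * A = 1) (hXi1 : (1 - B0) * Xi = 1)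
    (hW : IsUnit (1 - A * Λ0 * Xi * Q0)) (hZ : IsUnit (1 - Xi * Q0 * A * Λ0))
    (a : Fin U → ℝ) (b : Fin V → ℝ) (yv : Fin U → ℝ) (ηv : Fin V → ℝ)
    (hy : yv = ((1 - A * Λ0 * Xi * Q0)⁻¹ * A).mulVec (a + (Λ0 * Xi).mulVec b))
    (hη : ηv = ((1 - Xi * Q0 * A * Λ0)⁻¹ * Xi).mulVec (b + (Q0 * A).mulVec a)) :
    yv = Λ0.mulVec ηv + R0.mulVec yv + a ∧ ηv = B0.mulVec ηv + Q0.mulVec yv + b := by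
  set W : Matrix (Fin U) (Fin U) ℝ := 1 - A * Λ0 * Xi * Q0 with hWdef
  set Z : Matrix (Fin V) (Fin V) ℝ := 1 - Xi * Q0 * A * Λ0 with hZdef
  have hWd : IsUnit W.det := (Matrix.isUnit_iff_isUnit_det W).mp hW
  have hZd : IsUnit Z.det := (Matrix.isUnit_iff_isUnit_det Z).mp hZ
  have hWW : W⁻¹ * W = 1 := Matrix.nonsing_inv_mul W hWd
  have hWW' : W * W⁻¹ = 1 := Matrix.mul_nonsing_inv W hWd
  have hZZ : Z⁻¹ * Z = 1 := Matrix.nonsing_inv_mul Z hZd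
  have hZZ' : Z * Z⁻¹ = 1 := Matrix.mul_nonsing_inv Z hZd
  have comm1 : A * Λ0 * Z⁻¹ = W⁻¹ * (A * Λ0) := by
    have h1 : W * (A * Λ0) = A * Λ0 * Z := by
      rw [hWdef, hZdef]
      simp only [Matrix.sub_mul, Matrix.mul_sub, Matrix.one_mul, Matrix.mul_one,
        Matrix.mul_assoc]
    calc A * Λ0 * Z⁻¹ = W⁻¹ * W * (A * Λ0) * Z⁻¹ := by rw [hWW, Matrix.one_mul]
      _ = W⁻¹ * (W * (A * Λ0)) * Z⁻¹ := by rw [Matrix.mul_assoc W⁻¹ W (A * Λ0)]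
      _ = W⁻¹ * (A * Λ0 * Z) * Z⁻¹ := by rw [h1]
      _ = W⁻¹ * (A * Λ0) * (Z * Z⁻¹) := by simp only [Matrix.mul_assoc]
      _ = W⁻¹ * (A * Λ0) := by rw [hZZ', Matrix.mul_one]
  have comm2 : Xi * Q0 * W⁻¹ = Z⁻¹ * (Xi * Q0) := by
    have h1 : Z * (Xi * Q0) = Xi * Q0 * W := by
      rw [hWdef, hZdef]
      simp only [Matrix.sub_mul, Matrix.mul_sub, Matrix.one_mul, Matrix.mul_one,
        Matrix.mul_assoc]
    calc Xi * Q0 * W⁻¹ = Z⁻¹ * Z * (Xi * Q0) * W⁻¹ := by rw [hZZ, Matrix.one_mul]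
      _ = Z⁻¹ * (Z * (Xi * Q0)) * W⁻¹ := by rw [Matrix.mul_assoc Z⁻¹ Z (Xi * Q0)]
      _ = Z⁻¹ * (Xi * Q0 * W) * W⁻¹ := by rw [h1]
      _ = Z⁻¹ * (Xi * Q0) * (W * W⁻¹) := by simp only [Matrix.mul_assoc]
      _ = Z⁻¹ * (Xi * Q0) := by rw [hWW', Matrix.mul_one]
  have key1 : W⁻¹ * (A * Λ0 * Xi) * (Q0 * A) + A = W⁻¹ * A := by
    have h3 : A * Λ0 * Xi * (Q0 * A) + W * A = A := by
      rw [hWdef]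
      simp only [Matrix.sub_mul, Matrix.one_mul, Matrix.mul_assoc]
      abel
    calc W⁻¹ * (A * Λ0 * Xi) * (Q0 * A) + A
        = W⁻¹ * (A * Λ0 * Xi * (Q0 * A)) + W⁻¹ * (W * A) := by
          rw [Matrix.mul_assoc W⁻¹ (A * Λ0 * Xi) (Q0 * A), ← Matrix.mul_assoc W⁻¹ W A,
            hWW, Matrix.one_mul]
      _ = W⁻¹ * (A * Λ0 * Xi * (Q0 * A) + W * A) := by rw [Matrix.mul_add]
      _ = W⁻¹ * A := by rw [h3]
  have key2 : Z⁻¹ * (Xi * Q0 * A) * (Λ0 * Xi) + Xi = Z⁻¹ * Xi := by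
    have h3 : Xi * Q0 * A * (Λ0 * Xi) + Z * Xi = Xi := by
      rw [hZdef]
      simp only [Matrix.sub_mul, Matrix.one_mul, Matrix.mul_assoc]
      abel
    calc Z⁻¹ * (Xi * Q0 * A) * (Λ0 * Xi) + Xi
        = Z⁻¹ * (Xi * Q0 * A * (Λ0 * Xi)) + Z⁻¹ * (Z * Xi) := by
          rw [Matrix.mul_assoc Z⁻¹ (Xi * Q0 * A) (Λ0 * Xi), ← Matrix.mul_assoc Z⁻¹ Z Xi,
            hZZ, Matrix.one_mul]
      _ = Z⁻¹ * (Xi * Q0 * A * (Λ0 * Xi) + Z * Xi) := by rw [Matrix.mul_add]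
      _ = Z⁻¹ * Xi := by rw [h3]
  have step1 : yv = (A * Λ0).mulVec ηv + A.mulVec a := by
    rw [hy, hη, Matrix.mulVec_mulVec]
    have e1 : A * Λ0 * (Z⁻¹ * Xi) = W⁻¹ * (A * Λ0 * Xi) := by
      rw [← Matrix.mul_assoc, comm1, Matrix.mul_assoc]
    rw [e1, Matrix.mulVec_add, Matrix.mulVec_add, Matrix.mulVec_mulVec,
      Matrix.mulVec_mulVec, Matrix.mul_assoc W⁻¹ A (Λ0 * Xi), ← Matrix.mul_assoc A Λ0 Xi,
      ← key1, Matrix.add_mulVec]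
    abel
  have step2 : ηv = (Xi * Q0).mulVec yv + Xi.mulVec b := by
    rw [hy, hη, Matrix.mulVec_mulVec]
    have e1 : Xi * Q0 * (W⁻¹ * A) = Z⁻¹ * (Xi * Q0 * A) := by
      rw [← Matrix.mul_assoc, comm2, Matrix.mul_assoc]
    rw [e1, Matrix.mulVec_add, Matrix.mulVec_add, Matrix.mulVec_mulVec,
      Matrix.mulVec_mulVec, Matrix.mul_assoc Z⁻¹ Xi (Q0 * A), ← Matrix.mul_assoc Xi Q0 A,
      ← key2, Matrix.add_mulVec]
    abel
  constructor
  · have h4 : (1 - R0).mulVec yv = Λ0.mulVec ηv + a := by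
      conv_lhs => rw [step1]
      rw [Matrix.mulVec_add, Matrix.mulVec_mulVec, Matrix.mulVec_mulVec,
        ← Matrix.mul_assoc, hA1, Matrix.one_mul, Matrix.one_mulVec]
    rw [Matrix.sub_mulVec, Matrix.one_mulVec, sub_eq_iff_eq_add] at h4
    exact h4.trans (by abel)
  · have h4 : (1 - B0).mulVec ηv = Q0.mulVec yv + b := by
      conv_lhs => rw [step2]
      rw [Matrix.mulVec_add, Matrix.mulVec_mulVec, Matrix.mulVec_mulVec,
        ← Matrix.mul_assoc, hXi1, Matrix.one_mul, Matrix.one_mulVec]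
    rw [Matrix.sub_mulVec, Matrix.one_mulVec, sub_eq_iff_eq_add] at h4
    exact h4.trans (by abel)



/-- **Theorem 1 (converse direction, pathwise form).** If for every `t : ℤ` the
sequences `η` and `y` satisfy the decoupled recursions
`η_{t+1} = M_{t+1}(α_{t+1} + Γ_{t+1} X_{t+1} + ξ_{t+1}
  + Q_{0,t+1} A_{t+1}(ν_{t+1} + K_{t+1} X_{t+1} + ε_{t+1})
  + Σ_k (B_{k,t+1} + Q_{0,t+1} A_{t+1} Λ_{k,t+1}) η_{t+1-k}
  + Σ_k (Q_{k,t+1} + Q_{0,t+1} A_{t+1} R_{k,t+1}) y_{t+1-k})` and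
`y_{t+1} = N_{t+1}(ν_{t+1} + K_{t+1} X_{t+1} + ε_{t+1}
  + Λ_{0,t+1} Ξ_{t+1}(α_{t+1} + Γ_{t+1} X_{t+1} + ξ_{t+1})
  + Σ_k (Λ_{k,t+1} + Λ_{0,t+1} Ξ_{t+1} B_{k,t+1}) η_{t+1-k}
  + Σ_k (R_{k,t+1} + Λ_{0,t+1} Ξ_{t+1} Q_{k,t+1}) y_{t+1-k})`,
then `η` and `y` satisfy the within-level DSEM equations for every `t : ℤ`. -/
theorem dsem_state_space_to_within (U V p L : ℕ)
    (hU : 0 < U) (hV : 0 < V) (hp : 0 < p) (hL : 1 ≤ L)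
    (ν : ℤ → Fin U → ℝ) (α : ℤ → Fin V → ℝ) (X : ℤ → Fin p → ℝ)
    (K : ℤ → Matrix (Fin U) (Fin p) ℝ) (Γ : ℤ → Matrix (Fin V) (Fin p) ℝ)
    (Λ : Fin (L + 1) → ℤ → Matrix (Fin U) (Fin V) ℝ)
    (R : Fin (L + 1) → ℤ → Matrix (Fin U) (Fin U) ℝ)
    (B : Fin (L + 1) → ℤ → Matrix (Fin V) (Fin V) ℝ)
    (Q : Fin (L + 1) → ℤ → Matrix (Fin V) (Fin U) ℝ)
    (hR0 : ∀ (t : ℤ) (i j : Fin U), i ≤ j → R 0 t i j = 0)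
    (hB0 : ∀ (t : ℤ) (i j : Fin V), i ≤ j → B 0 t i j = 0)
    (ε : ℤ → Fin U → ℝ) (ξ : ℤ → Fin V → ℝ)
    (A : ℤ → Matrix (Fin U) (Fin U) ℝ) (hA : ∀ t, A t = (1 - R 0 t)⁻¹)
    (Ξ : ℤ → Matrix (Fin V) (Fin V) ℝ) (hΞ : ∀ t, Ξ t = (1 - B 0 t)⁻¹)
    (hMinv : ∀ t, IsUnit (1 - Ξ t * Q 0 t * A t * Λ 0 t))
    (hNinv : ∀ t, IsUnit (1 - A t * Λ 0 t * Ξ t * Q 0 t))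
    (M : ℤ → Matrix (Fin V) (Fin V) ℝ)
    (hM : ∀ t, M t = (1 - Ξ t * Q 0 t * A t * Λ 0 t)⁻¹ * Ξ t)
    (N : ℤ → Matrix (Fin U) (Fin U) ℝ)
    (hN : ∀ t, N t = (1 - A t * Λ 0 t * Ξ t * Q 0 t)⁻¹ * A t)
    (η : ℤ → Fin V → ℝ) (y : ℤ → Fin U → ℝ)
    -- the decoupled recursion for η
    (hrecη : ∀ t : ℤ, η (t + 1) =
      (M (t + 1)).mulVec (α (t + 1) + (Γ (t + 1)).mulVec (X (t + 1)) + ξ (t + 1) +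
        (Q 0 (t + 1) * A (t + 1)).mulVec
          (ν (t + 1) + (K (t + 1)).mulVec (X (t + 1)) + ε (t + 1)) +
        (∑ k : Fin L, (B k.succ (t + 1) +
            Q 0 (t + 1) * A (t + 1) * Λ k.succ (t + 1)).mulVec
          (η (t + 1 - (k.succ.val : ℤ)))) +
        (∑ k : Fin L, (Q k.succ (t + 1) +
            Q 0 (t + 1) * A (t + 1) * R k.succ (t + 1)).mulVec
          (y (t + 1 - (k.succ.val : ℤ))))))
    -- the decoupled recursion for y
    (hrecy : ∀ t : ℤ, y (t + 1) =
      (N (t + 1)).mulVec (ν (t + 1) + (K (t + 1)).mulVec (X (t + 1)) + ε (t + 1) +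
        (Λ 0 (t + 1) * Ξ (t + 1)).mulVec
          (α (t + 1) + (Γ (t + 1)).mulVec (X (t + 1)) + ξ (t + 1)) +
        (∑ k : Fin L, (Λ k.succ (t + 1) +
            Λ 0 (t + 1) * Ξ (t + 1) * B k.succ (t + 1)).mulVec
          (η (t + 1 - (k.succ.val : ℤ)))) +
        (∑ k : Fin L, (R k.succ (t + 1) +
            Λ 0 (t + 1) * Ξ (t + 1) * Q k.succ (t + 1)).mulVec
          (y (t + 1 - (k.succ.val : ℤ)))))) :
    ∀ t : ℤ,
      y t = ν t +
        (∑ l : Fin (L + 1), (Λ l t).mulVec (η (t - (l.val : ℤ)))) +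
        (∑ l : Fin (L + 1), (R l t).mulVec (y (t - (l.val : ℤ)))) +
        (K t).mulVec (X t) + ε t ∧
      η t = α t +
        (∑ l : Fin (L + 1), (B l t).mulVec (η (t - (l.val : ℤ)))) +
        (∑ l : Fin (L + 1), (Q l t).mulVec (y (t - (l.val : ℤ)))) +
        (Γ t).mulVec (X t) + ξ t := by
  intro t
  -- invertibility of the contemporaneous factors
  have hdetR : ((1 : Matrix (Fin U) (Fin U) ℝ) - R 0 t).det = 1 := by
    rw [Matrix.det_of_lowerTriangular _ (fun i j hij => by
      have hij' : i < j := hij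
      simp [Matrix.sub_apply, Matrix.one_apply_ne (ne_of_lt hij'),
        hR0 t i j (le_of_lt hij')])]
    simp [Matrix.sub_apply, Matrix.one_apply_eq, hR0 t _ _ le_rfl]
  have hdetB : ((1 : Matrix (Fin V) (Fin V) ℝ) - B 0 t).det = 1 := by
    rw [Matrix.det_of_lowerTriangular _ (fun i j hij => by
      have hij' : i < j := hij
      simp [Matrix.sub_apply, Matrix.one_apply_ne (ne_of_lt hij'),
        hB0 t i j (le_of_lt hij')])]
    simp [Matrix.sub_apply, Matrix.one_apply_eq, hB0 t _ _ le_rfl]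
  have hA1 : (1 - R 0 t) * A t = 1 := by
    rw [hA t]; exact Matrix.mul_nonsing_inv _ (by rw [hdetR]; exact isUnit_one)
  have hXi1 : (1 - B 0 t) * Ξ t = 1 := by
    rw [hΞ t]; exact Matrix.mul_nonsing_inv _ (by rw [hdetB]; exact isUnit_one)
  set a : Fin U → ℝ := ν t + (K t).mulVec (X t) + ε t +
      (∑ k : Fin L, (Λ k.succ t).mulVec (η (t - (k.succ.val : ℤ)))) +
      (∑ k : Fin L, (R k.succ t).mulVec (y (t - (k.succ.val : ℤ)))) with ha
  set b : Fin V → ℝ := α t + (Γ t).mulVec (X t) + ξ t +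
      (∑ k : Fin L, (B k.succ t).mulVec (η (t - (k.succ.val : ℤ)))) +
      (∑ k : Fin L, (Q k.succ t).mulVec (y (t - (k.succ.val : ℤ)))) with hb
  have hy' : y t = ((1 - A t * Λ 0 t * Ξ t * Q 0 t)⁻¹ * A t).mulVec
      (a + (Λ 0 t * Ξ t).mulVec b) := by
    have h := hrecy (t - 1)
    rw [sub_add_cancel] at h
    rw [h, hN t]
    congr 1
    rw [ha, hb]
    simp only [Matrix.add_mulVec, Matrix.mulVec_add, ← Matrix.mulVec_mulVec,
      Finset.sum_add_distrib, mulVec_sum'_s13]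
    abel
  have hη' : η t = ((1 - Ξ t * Q 0 t * A t * Λ 0 t)⁻¹ * Ξ t).mulVec
      (b + (Q 0 t * A t).mulVec a) := by
    have h := hrecη (t - 1)
    rw [sub_add_cancel] at h
    rw [h, hM t]
    congr 1
    rw [ha, hb]
    simp only [Matrix.add_mulVec, Matrix.mulVec_add, ← Matrix.mulVec_mulVec,
      Finset.sum_add_distrib, mulVec_sum'_s13]
    abel
  obtain ⟨g1, g2⟩ := dsem_key (R 0 t) (A t) (B 0 t) (Ξ t) (Λ 0 t) (Q 0 t)
    hA1 hXi1 (hNinv t) (hMinv t) a b (y t) (η t) hy' hη'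
  constructor
  · conv_lhs => rw [g1]
    rw [ha, Fin.sum_univ_succ, Fin.sum_univ_succ]
    simp only [Fin.val_zero, Nat.cast_zero, sub_zero]
    abel
  · conv_lhs => rw [g2]
    rw [hb, Fin.sum_univ_succ, Fin.sum_univ_succ]
    simp only [Fin.val_zero, Nat.cast_zero, sub_zero]
    abel
end
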